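/- Let λ ∈ ℝ be such that λ ≠ ‖ξ_m + K‖² for every m ∈ ℤ², and define N(λ) ∈ ℂ² componentwise by N(λ) = ∑_{m ∈ ℤ²} exp(i·ξ_m·x₀)·(ξ_m + K)/(‖ξ_m + K‖² − λ)² (each of the two component series is absolutely summable). Then exp(iπ/3)·(N(λ)·v₁) = N(λ)·v₂, where the dot product of a ℂ²-vector with an ℝ²-vector is the bilinear extension of the Euclidean inner product. -/

import Mathlib

open Real

noncomputable section
set_option maxHeartbeats 1000000

/-- ℝ² with the Euclidean norm. -/
abbrev E2 := EuclideanSpace ℝ (Fin 2)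

/-- Build a vector in ℝ². -/
def vec (x y : ℝ) : E2 := (WithLp.equiv 2 _).symm ![x, y]

/-- Dual basis vector k₁ = (4π/(a√3))(1/2, √3/2). -/
def k1 (a : ℝ) : E2 := (4 * π / (a * Real.sqrt 3)) • vec (1/2) (Real.sqrt 3 / 2)

/-- Dual basis vector k₂ = (4π/(a√3))(1/2, −√3/2). -/
def k2 (a : ℝ) : E2 := (4 * π / (a * Real.sqrt 3)) • vec (1/2) (-(Real.sqrt 3) / 2)

/-- Dual lattice vector ξ_m = m₁k₁ + m₂k₂. -/
def xiv (a : ℝ) (m : ℤ × ℤ) : E2 := (m.1 : ℝ) • k1 a + (m.2 : ℝ) • k2 a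

/-- The Dirac point K = (2/3)k₁ + (1/3)k₂. -/
def KD (a : ℝ) : E2 := (2/3 : ℝ) • k1 a + (1/3 : ℝ) • k2 a

/-- Lattice basis vector v₁ = a(√3/2, 1/2). -/
def v1 (a : ℝ) : E2 := a • vec (Real.sqrt 3 / 2) (1/2)

/-- Lattice basis vector v₂ = a(√3/2, −1/2). -/
def v2 (a : ℝ) : E2 := a • vec (Real.sqrt 3 / 2) (-(1/2))

/-- x₀ = (2/3)(v₁ + v₂). -/
def x0 (a : ℝ) : E2 := (2/3 : ℝ) • (v1 a + v2 a)

/-- Rotation of ℝ² by 2π/3, i.e. the matrix (1/2)[[−1, −√3], [√3, −1]]. -/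
def Rrot (v : E2) : E2 :=
  vec ((-v 0 - Real.sqrt 3 * v 1) / 2) ((Real.sqrt 3 * v 0 - v 1) / 2)

/-- T(m₁, m₂) = (−m₁ + m₂ − 1, −m₁ − 1). -/
def T (m : ℤ × ℤ) : ℤ × ℤ := (-m.1 + m.2 - 1, -m.1 - 1)

lemma vec_apply0 (x y : ℝ) : vec x y 0 = x := rfl
lemma vec_apply1 (x y : ℝ) : vec x y 1 = y := rfl
lemma sqrt3_sq : Real.sqrt 3 ^ 2 = 3 := Real.sq_sqrt (by norm_num)
lemma sqrt3_pos : 0 < Real.sqrt 3 := Real.sqrt_pos.mpr (by norm_num)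
lemma w_apply0 (a : ℝ) (m : ℤ × ℤ) :
    (xiv a m + KD a) 0 = 4 * π / (a * Real.sqrt 3) * (((m.1 : ℝ) + m.2 + 1) / 2) := by
  simp only [xiv, KD, k1, k2, PiLp.add_apply, PiLp.smul_apply, vec_apply0, smul_eq_mul]
  ring
lemma w_apply1 (a : ℝ) (m : ℤ × ℤ) :
    (xiv a m + KD a) 1 =
      4 * π / (a * Real.sqrt 3) * (Real.sqrt 3 * (((m.1 : ℝ) - m.2 + 1/3) / 2)) := by
  simp only [xiv, KD, k1, k2, PiLp.add_apply, PiLp.smul_apply, vec_apply1, smul_eq_mul]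
  ring
lemma w_norm_sq (a : ℝ) (m : ℤ × ℤ) :
    ‖xiv a m + KD a‖ ^ 2 = (4 * π / (a * Real.sqrt 3)) ^ 2 *
      ((((m.1 : ℝ) + m.2 + 1) / 2) ^ 2 + 3 * (((m.1 : ℝ) - m.2 + 1/3) / 2) ^ 2) := by
  rw [← real_inner_self_eq_norm_sq, PiLp.inner_apply, Fin.sum_univ_two, w_apply0, w_apply1]
  simp only [RCLike.inner_apply, starRingEnd_apply, star_trivial]
  linear_combination (4 * π / (a * Real.sqrt 3)) ^ 2 * ((((m.1:ℝ) - m.2 + 1/3) / 2) ^ 2) * sqrt3_sq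

lemma mu_bound1 (t : ℤ) : ((t : ℝ)) ^ 2 / 9 ≤ ((t : ℝ) + 2/3) ^ 2 := by
  rcases le_or_gt 0 t with h | h
  · have h' : (0:ℝ) ≤ t := by exact_mod_cast h
    nlinarith
  · have h'' : t ≤ -1 := by omega
    have h' : (t:ℝ) ≤ -1 := by exact_mod_cast h''
    nlinarith [mul_nonneg (by linarith : (0:ℝ) ≤ -((t:ℝ)+1)) (by linarith : (0:ℝ) ≤ -((t:ℝ)+1/2))]

lemma mu_bound2 (t : ℤ) : ((t : ℝ)) ^ 2 / 9 ≤ ((t : ℝ) + 1/3) ^ 2 := by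
  rcases le_or_gt 0 t with h | h
  · have h' : (0:ℝ) ≤ t := by exact_mod_cast h
    nlinarith
  · have h'' : t ≤ -1 := by omega
    have h' : (t:ℝ) ≤ -1 := by exact_mod_cast h''
    nlinarith [mul_nonneg (by linarith : (0:ℝ) ≤ -((t:ℝ)+1)) (by linarith : (0:ℝ) ≤ -((t:ℝ)+1/6))]

lemma summable_main (a : ℝ) (ha : 0 < a) (lam : ℝ)
    (hlam : ∀ m : ℤ × ℤ, lam ≠ ‖xiv a m + KD a‖ ^ 2) (j : Fin 2) :
    Summable (fun m : ℤ × ℤ =>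
      Complex.exp (Complex.I * ((inner ℝ (xiv a m) (x0 a) : ℝ) : ℂ)) *
        ((xiv a m + KD a) j : ℂ) /
        ((‖xiv a m + KD a‖ ^ 2 - lam : ℝ) : ℂ) ^ 2) := by
  set c : ℝ := 4 * π / (a * Real.sqrt 3) with hc_def
  have hcpos : 0 < c := by
    apply div_pos (by positivity) (mul_pos ha sqrt3_pos)
  set s : ℝ := Real.sqrt 3 with hs_def
  have hs1 : 1 ≤ s := by nlinarith [sqrt3_sq, sqrt3_pos]
  -- norm of each term
  have hnorm : ∀ m : ℤ × ℤ,
      ‖Complex.exp (Complex.I * ((inner ℝ (xiv a m) (x0 a) : ℝ) : ℂ)) *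
        ((xiv a m + KD a) j : ℂ) /
        ((‖xiv a m + KD a‖ ^ 2 - lam : ℝ) : ℂ) ^ 2‖ =
      |(xiv a m + KD a) j| / (‖xiv a m + KD a‖ ^ 2 - lam) ^ 2 := by
    intro m
    rw [norm_div, norm_mul, mul_comm Complex.I,
      Complex.norm_exp_ofReal_mul_I, one_mul, norm_pow, Complex.norm_real,
      Real.norm_eq_abs, Complex.norm_real, Real.norm_eq_abs, sq_abs]
  set M : ℕ := ⌈36 * |lam| / c ^ 2⌉₊ + 1 with hM_def
  have hM : 36 * |lam| / c ^ 2 ≤ (M : ℝ) := by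
    refine (Nat.le_ceil _).trans ?_
    exact_mod_cast Nat.le_succ _
  have hM1 : (1 : ℝ) ≤ (M : ℝ) := by exact_mod_cast Nat.one_le_iff_ne_zero.mpr (by omega)
  set S : Set (ℤ × ℤ) := {m | m.1.natAbs ≤ M ∧ m.2.natAbs ≤ M} with hS_def
  have hSfin : S.Finite := by
    apply Set.Finite.subset (Set.finite_Icc ((-(M:ℤ), -(M:ℤ))) ((M:ℤ), (M:ℤ)))
    intro m hm
    simp only [hS_def, Set.mem_setOf_eq] at hm
    simp only [Set.mem_Icc, Prod.le_def]
    refine ⟨⟨?_, ?_⟩, ?_, ?_⟩ <;> omega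
  rw [← hSfin.summable_compl_iff]
  apply Summable.of_norm
  set Cst : ℝ := 2 * c * s * (36 / c ^ 2) ^ 2 with hCst_def
  have hg : Summable (fun m : ↥Sᶜ =>
      Cst * ‖(finTwoArrowEquiv ℤ).symm (m : ℤ × ℤ)‖ ^ (-(3:ℝ))) := by
    have E : Summable fun x : Fin 2 → ℤ => ‖x‖ ^ (-(3:ℝ)) :=
      EisensteinSeries.summable_one_div_norm_rpow (by norm_num)
    have E2 : Summable (fun m : ℤ × ℤ => ‖(finTwoArrowEquiv ℤ).symm m‖ ^ (-(3:ℝ))) := by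
      rw [← Equiv.summable_iff (finTwoArrowEquiv ℤ)]
      refine E.congr (fun x => ?_)
      rw [Function.comp_apply, Equiv.symm_apply_apply]
    exact (E2.mul_left Cst).subtype _
  apply Summable.of_nonneg_of_le (fun m => norm_nonneg _) ?_ hg
  rintro ⟨m, hm⟩
  simp only [Function.comp_apply]
  set n : ℝ := ((max m.1.natAbs m.2.natAbs : ℕ) : ℝ) with hn_def
  have hnorm_e : ‖(finTwoArrowEquiv ℤ).symm m‖ = n := by
    rw [EisensteinSeries.norm_eq_max_natAbs]
    simp [finTwoArrowEquiv, hn_def]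
  have hMn : (M : ℝ) + 1 ≤ n := by
    have : M + 1 ≤ max m.1.natAbs m.2.natAbs := by
      simp only [Set.mem_compl_iff, hS_def, Set.mem_setOf_eq, not_and_or, not_le] at hm
      omega
    rw [hn_def]
    push_cast
    exact_mod_cast this
  have hn1 : (1:ℝ) ≤ n := by linarith
  have hnpos : (0:ℝ) < n := by linarith
  have habs1 : |(m.1 : ℝ)| ≤ n := by
    have h : ((m.1.natAbs : ℕ) : ℝ) ≤ n := by
      rw [hn_def]; exact_mod_cast le_max_left m.1.natAbs m.2.natAbs
    rwa [Nat.cast_natAbs, Int.cast_abs] at h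
  have habs2 : |(m.2 : ℝ)| ≤ n := by
    have h : ((m.2.natAbs : ℕ) : ℝ) ≤ n := by
      rw [hn_def]; exact_mod_cast le_max_right m.1.natAbs m.2.natAbs
    rwa [Nat.cast_natAbs, Int.cast_abs] at h
  have hsqn : n ^ 2 ≤ (m.1:ℝ)^2 + (m.2:ℝ)^2 := by
    rcases max_cases m.1.natAbs m.2.natAbs with ⟨h1, _⟩ | ⟨h1, _⟩ <;>
      · rw [hn_def, h1, Nat.cast_natAbs, Int.cast_abs]
        nlinarith [sq_nonneg ((m.1:ℝ)), sq_nonneg ((m.2:ℝ)), sq_abs ((m.1:ℝ)), sq_abs ((m.2:ℝ))]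
  -- lower bound for the norm
  have hlow : c ^ 2 / 36 * n ^ 2 ≤ ‖xiv a m + KD a‖ ^ 2 - lam := by
    have hq : c ^ 2 / 18 * ((m.1:ℝ)^2 + (m.2:ℝ)^2) ≤ ‖xiv a m + KD a‖ ^ 2 := by
      rw [w_norm_sq]
      have h1 := mu_bound1 m.1
      have h2 := mu_bound2 m.2
      have hkey : ((m.1:ℝ)^2 + (m.2:ℝ)^2) / 18 ≤
          (((m.1 : ℝ) + m.2 + 1) / 2) ^ 2 + 3 * (((m.1 : ℝ) - m.2 + 1/3) / 2) ^ 2 := by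
        nlinarith [sq_nonneg (((m.1:ℝ) + 2/3) - ((m.2:ℝ) + 1/3))]
      nlinarith [sq_nonneg c]
    have hlamn : lam ≤ c ^ 2 / 36 * n ^ 2 := by
      have h1 : |lam| ≤ c ^ 2 / 36 * (M:ℝ) := by
        rw [div_le_iff₀ (by positivity)] at hM
        nlinarith
      have h2 : (M:ℝ) ≤ n ^ 2 := by nlinarith
      have := abs_le.mp (le_refl |lam|) |>.2
      nlinarith [le_abs_self lam]
    nlinarith
  have hdpos : (0:ℝ) < c ^ 2 / 36 * n ^ 2 := by positivity
  -- numerator bound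
  have hnum : |(xiv a m + KD a) j| ≤ 2 * c * s * n := by
    have habs_sum : |(m.1:ℝ) + m.2 + 1| ≤ 2 * n + 1 := by
      have e1 := abs_add_le ((m.1:ℝ) + m.2) 1
      have e2 := abs_add_le ((m.1:ℝ)) ((m.2:ℝ))
      rw [abs_one] at e1
      linarith
    have habs_diff : |(m.1:ℝ) - m.2 + 1/3| ≤ 2 * n + 1 := by
      have e1 := abs_add_le ((m.1:ℝ) - m.2) (1/3)
      have e2 := abs_sub ((m.1:ℝ)) ((m.2:ℝ))
      rw [abs_of_pos (by norm_num : (0:ℝ) < 1/3)] at e1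
      linarith
    have hspos : (0:ℝ) < s := by linarith
    fin_cases j
    · show |(xiv a m + KD a) 0| ≤ 2 * c * s * n
      rw [w_apply0, ← hs_def, ← hc_def, abs_mul, abs_of_pos hcpos, abs_div, abs_two]
      have h5 : |((m.1:ℝ) + m.2 + 1)| / 2 ≤ (2*n+1)/2 := by gcongr
      have h3 : (2*n+1)/2 ≤ 2*s*n := by
        nlinarith [mul_nonneg (sub_nonneg.mpr hs1) hnpos.le]
      calc c * (|((m.1:ℝ) + m.2 + 1)| / 2) ≤ c * (2*s*n) :=
            mul_le_mul_of_nonneg_left (h5.trans h3) hcpos.le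
        _ = 2 * c * s * n := by ring
    · show |(xiv a m + KD a) 1| ≤ 2 * c * s * n
      rw [w_apply1, ← hs_def, ← hc_def, abs_mul, abs_of_pos hcpos, abs_mul, abs_of_pos hspos,
        abs_div, abs_two]
      have h5 : |((m.1:ℝ) - m.2 + 1/3)| / 2 ≤ (2*n+1)/2 := by gcongr
      have h4 : (2*n+1)/2 ≤ 2*n := by linarith
      calc c * (s * (|((m.1:ℝ) - m.2 + 1/3)| / 2)) ≤ c * (s * (2*n)) := by
            apply mul_le_mul_of_nonneg_left _ hcpos.le
            exact mul_le_mul_of_nonneg_left (h5.trans h4) hspos.le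
        _ = 2 * c * s * n := by ring
  rw [hnorm m, hnorm_e]
  have hrpow : n ^ (-(3:ℝ)) = 1 / n ^ (3:ℕ) := by
    rw [show (-(3:ℝ)) = -((3:ℕ):ℝ) by norm_num, Real.rpow_neg hnpos.le, Real.rpow_natCast,
      one_div]
  rw [hrpow]
  calc |(xiv a m + KD a) j| / (‖xiv a m + KD a‖ ^ 2 - lam) ^ 2
      ≤ (2 * c * s * n) / (c ^ 2 / 36 * n ^ 2) ^ 2 := by
        gcongr
    _ = Cst * (1 / n ^ (3:ℕ)) := by
        rw [hCst_def]
        field_simp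


lemma inner_x0 (a : ℝ) (ha : a ≠ 0) (m : ℤ × ℤ) :
    (inner ℝ (xiv a m) (x0 a) : ℝ) = 4 * π / 3 * ((m.1 : ℝ) + m.2) := by
  have h0 : xiv a m 0 = 4 * π / (a * Real.sqrt 3) * (((m.1 : ℝ) + m.2) / 2) := by
    simp only [xiv, k1, k2, PiLp.add_apply, PiLp.smul_apply, vec_apply0, smul_eq_mul]; ring
  have h1 : xiv a m 1 =
      4 * π / (a * Real.sqrt 3) * (Real.sqrt 3 * (((m.1 : ℝ) - m.2) / 2)) := by
    simp only [xiv, k1, k2, PiLp.add_apply, PiLp.smul_apply, vec_apply1, smul_eq_mul]; ring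
  have x00 : x0 a 0 = 2 * a * Real.sqrt 3 / 3 := by
    simp only [x0, v1, v2, PiLp.add_apply, PiLp.smul_apply, vec_apply0, smul_eq_mul]; ring
  have x01 : x0 a 1 = 0 := by
    simp only [x0, v1, v2, PiLp.add_apply, PiLp.smul_apply, vec_apply1, smul_eq_mul]; ring
  rw [PiLp.inner_apply, Fin.sum_univ_two, h0, h1, x00, x01]
  simp only [RCLike.inner_apply, starRingEnd_apply, star_trivial]
  field_simp
  ring



lemma norm_T (a : ℝ) (m : ℤ × ℤ) : ‖xiv a (T m) + KD a‖ ^ 2 = ‖xiv a m + KD a‖ ^ 2 := by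
  rw [w_norm_sq, w_norm_sq]
  simp only [T]
  push_cast
  ring


def Tequiv : (ℤ × ℤ) ≃ (ℤ × ℤ) where
  toFun := T
  invFun m := T (T m)
  left_inv m := by simp only [T, Prod.ext_iff]; omega
  right_inv m := by simp only [T, Prod.ext_iff]; omega

lemma hexp (m : ℤ × ℤ) :
    Complex.exp (Complex.I * ((4 * π / 3 * (((T m).1 : ℝ) + ((T m).2 : ℝ)) : ℝ) : ℂ)) =
      Complex.exp (Complex.I * ((-(2 * π / 3) : ℝ) : ℂ)) *
        Complex.exp (Complex.I * ((4 * π / 3 * ((m.1 : ℝ) + (m.2 : ℝ)) : ℝ) : ℂ)) := by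
  rw [← Complex.exp_add]
  have key : Complex.I * ((4 * π / 3 * (((T m).1 : ℝ) + ((T m).2 : ℝ)) : ℝ) : ℂ) =
      (Complex.I * ((-(2 * π / 3) : ℝ) : ℂ) +
        Complex.I * ((4 * π / 3 * ((m.1 : ℝ) + (m.2 : ℝ)) : ℝ) : ℂ)) +
      ((-2 * m.1 - 1 : ℤ) : ℂ) * (2 * π * Complex.I) := by
    simp only [T]
    push_cast
    ring
  rw [key, Complex.exp_add, Complex.exp_int_mul_two_pi_mul_I, mul_one]

lemma omega_val :
    Complex.exp (Complex.I * ((-(2 * π / 3) : ℝ) : ℂ)) =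
      -(1/2) - ((Real.sqrt 3 : ℝ) : ℂ) / 2 * Complex.I := by
  rw [mul_comm, Complex.exp_mul_I, ← Complex.ofReal_cos, ← Complex.ofReal_sin]
  have hc : Real.cos (-(2 * π / 3)) = -(1/2) := by
    rw [Real.cos_neg, show (2 * π / 3) = π - π/3 by ring, Real.cos_pi_sub,
      Real.cos_pi_div_three]
  have hs : Real.sin (-(2 * π / 3)) = -(Real.sqrt 3 / 2) := by
    rw [Real.sin_neg, show (2 * π / 3) = π - π/3 by ring, Real.sin_pi_sub,
      Real.sin_pi_div_three]
  rw [hc, hs]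
  push_cast
  ring

lemma e_val :
    Complex.exp (Complex.I * ((π / 3 : ℝ) : ℂ)) =
      1/2 + ((Real.sqrt 3 : ℝ) : ℂ) / 2 * Complex.I := by
  rw [mul_comm, Complex.exp_mul_I, ← Complex.ofReal_cos, ← Complex.ofReal_sin,
    Real.cos_pi_div_three, Real.sin_pi_div_three]
  push_cast
  ring


open RealInnerProductSpace in
/-- with N(λ) ∈ ℂ² defined componentwise by
N(λ)_j = ∑_m exp(i ξ_m·x₀)(ξ_m + K)_j/(‖ξ_m + K‖² − λ)², each component series
is summable and exp(iπ/3)·(N(λ)·v₁) = N(λ)·v₂. -/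
theorem stmt_13 (a : ℝ) (ha : 0 < a) (lam : ℝ)
    (hlam : ∀ m : ℤ × ℤ, lam ≠ ‖xiv a m + KD a‖ ^ 2) :
    letI N : Fin 2 → ℂ := fun j => ∑' m : ℤ × ℤ,
      Complex.exp (Complex.I * (⟪xiv a m, x0 a⟫ : ℝ)) *
        ((xiv a m + KD a) j : ℂ) / ((‖xiv a m + KD a‖ ^ 2 - lam : ℝ) : ℂ) ^ 2
    (∀ j : Fin 2, Summable (fun m : ℤ × ℤ =>
      Complex.exp (Complex.I * (⟪xiv a m, x0 a⟫ : ℝ)) *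
        ((xiv a m + KD a) j : ℂ) /
        ((‖xiv a m + KD a‖ ^ 2 - lam : ℝ) : ℂ) ^ 2)) ∧
    Complex.exp (Complex.I * (π / 3 : ℝ)) *
        (N 0 * ((v1 a) 0 : ℝ) + N 1 * ((v1 a) 1 : ℝ))
      = N 0 * ((v2 a) 0 : ℝ) + N 1 * ((v2 a) 1 : ℝ) := by

  have hane : a ≠ 0 := ha.ne'
  have hsum : ∀ j : Fin 2, Summable (fun m : ℤ × ℤ =>
      Complex.exp (Complex.I * ((inner ℝ (xiv a m) (x0 a) : ℝ) : ℂ)) *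
        ((xiv a m + KD a) j : ℂ) /
        ((‖xiv a m + KD a‖ ^ 2 - lam : ℝ) : ℂ) ^ 2) :=
    fun j => summable_main a ha lam hlam j
  have key1 : ∀ m : ℤ × ℤ,
      (fun m : ℤ × ℤ => Complex.exp (Complex.I * ((inner ℝ (xiv a m) (x0 a) : ℝ) : ℂ)) *
        ((xiv a m + KD a) 1 : ℂ) / ((‖xiv a m + KD a‖ ^ 2 - lam : ℝ) : ℂ) ^ 2) (Tequiv m) =
      Complex.exp (Complex.I * ((-(2 * π / 3) : ℝ) : ℂ)) *
        (((Real.sqrt 3 : ℝ) : ℂ) / 2 *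
          (Complex.exp (Complex.I * ((inner ℝ (xiv a m) (x0 a) : ℝ) : ℂ)) *
            ((xiv a m + KD a) 0 : ℂ) / ((‖xiv a m + KD a‖ ^ 2 - lam : ℝ) : ℂ) ^ 2) -
         1 / 2 *
          (Complex.exp (Complex.I * ((inner ℝ (xiv a m) (x0 a) : ℝ) : ℂ)) *
            ((xiv a m + KD a) 1 : ℂ) / ((‖xiv a m + KD a‖ ^ 2 - lam : ℝ) : ℂ) ^ 2)) := by
    intro m
    show Complex.exp (Complex.I * ((inner ℝ (xiv a (T m)) (x0 a) : ℝ) : ℂ)) *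
        ((xiv a (T m) + KD a) 1 : ℂ) / ((‖xiv a (T m) + KD a‖ ^ 2 - lam : ℝ) : ℂ) ^ 2 = _
    rw [inner_x0 a hane (T m), inner_x0 a hane m, norm_T a m, hexp m,
      w_apply1 a (T m), w_apply0 a m, w_apply1 a m]
    simp only [T]
    push_cast
    ring
  have Eq1 : (∑' m : ℤ × ℤ, Complex.exp (Complex.I * ((inner ℝ (xiv a m) (x0 a) : ℝ) : ℂ)) *
        ((xiv a m + KD a) 1 : ℂ) / ((‖xiv a m + KD a‖ ^ 2 - lam : ℝ) : ℂ) ^ 2) =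
      Complex.exp (Complex.I * ((-(2 * π / 3) : ℝ) : ℂ)) *
        (((Real.sqrt 3 : ℝ) : ℂ) / 2 *
          (∑' m : ℤ × ℤ, Complex.exp (Complex.I * ((inner ℝ (xiv a m) (x0 a) : ℝ) : ℂ)) *
            ((xiv a m + KD a) 0 : ℂ) / ((‖xiv a m + KD a‖ ^ 2 - lam : ℝ) : ℂ) ^ 2) -
         1 / 2 *
          (∑' m : ℤ × ℤ, Complex.exp (Complex.I * ((inner ℝ (xiv a m) (x0 a) : ℝ) : ℂ)) *
            ((xiv a m + KD a) 1 : ℂ) / ((‖xiv a m + KD a‖ ^ 2 - lam : ℝ) : ℂ) ^ 2)) := by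
    conv_lhs => rw [← Equiv.tsum_eq Tequiv]
    rw [tsum_congr key1, tsum_mul_left,
      Summable.tsum_sub ((hsum 0).mul_left _) ((hsum 1).mul_left _), tsum_mul_left, tsum_mul_left]
  have hs3 : ((Real.sqrt 3 : ℝ) : ℂ) ^ 2 = 3 := by
    rw [← Complex.ofReal_pow, sqrt3_sq]
    norm_num
  rw [omega_val] at Eq1
  have h30 : ((3 : ℂ) - ((Real.sqrt 3 : ℝ) : ℂ) * Complex.I) ≠ 0 := by
    intro hcon
    rw [Complex.ext_iff] at hcon
    simp only [Complex.sub_re, Complex.mul_re, Complex.ofReal_re, Complex.I_re,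
      Complex.ofReal_im, Complex.I_im, Complex.zero_re] at hcon
    norm_num at hcon
  have h2 : ((3 : ℂ) - ((Real.sqrt 3 : ℝ) : ℂ) * Complex.I) *
      ((∑' m : ℤ × ℤ, Complex.exp (Complex.I * ((inner ℝ (xiv a m) (x0 a) : ℝ) : ℂ)) *
        ((xiv a m + KD a) 1 : ℂ) / ((‖xiv a m + KD a‖ ^ 2 - lam : ℝ) : ℂ) ^ 2) +
       Complex.I * (∑' m : ℤ × ℤ, Complex.exp (Complex.I * ((inner ℝ (xiv a m) (x0 a) : ℝ) : ℂ)) *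
        ((xiv a m + KD a) 0 : ℂ) / ((‖xiv a m + KD a‖ ^ 2 - lam : ℝ) : ℂ) ^ 2)) = 0 := by
    linear_combination (4 : ℂ) * Eq1 +
      (-(Complex.I) * (∑' m : ℤ × ℤ,
        Complex.exp (Complex.I * ((inner ℝ (xiv a m) (x0 a) : ℝ) : ℂ)) *
        ((xiv a m + KD a) 0 : ℂ) / ((‖xiv a m + KD a‖ ^ 2 - lam : ℝ) : ℂ) ^ 2)) * hs3 +
      (-(((Real.sqrt 3 : ℝ) : ℂ)) * (∑' m : ℤ × ℤ,
        Complex.exp (Complex.I * ((inner ℝ (xiv a m) (x0 a) : ℝ) : ℂ)) *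
        ((xiv a m + KD a) 0 : ℂ) / ((‖xiv a m + KD a‖ ^ 2 - lam : ℝ) : ℂ) ^ 2)) * Complex.I_sq
  have hN : (∑' m : ℤ × ℤ, Complex.exp (Complex.I * ((inner ℝ (xiv a m) (x0 a) : ℝ) : ℂ)) *
        ((xiv a m + KD a) 1 : ℂ) / ((‖xiv a m + KD a‖ ^ 2 - lam : ℝ) : ℂ) ^ 2) =
      -Complex.I * (∑' m : ℤ × ℤ,
        Complex.exp (Complex.I * ((inner ℝ (xiv a m) (x0 a) : ℝ) : ℂ)) *
        ((xiv a m + KD a) 0 : ℂ) / ((‖xiv a m + KD a‖ ^ 2 - lam : ℝ) : ℂ) ^ 2) := by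
    have h4 := (mul_eq_zero.mp h2).resolve_left h30
    linear_combination h4
  have hv10 : (v1 a) 0 = a * (Real.sqrt 3 / 2) := by
    simp only [v1, PiLp.smul_apply, vec_apply0, smul_eq_mul]
  have hv11 : (v1 a) 1 = a * (1 / 2) := by
    simp only [v1, PiLp.smul_apply, vec_apply1, smul_eq_mul]
  have hv20 : (v2 a) 0 = a * (Real.sqrt 3 / 2) := by
    simp only [v2, PiLp.smul_apply, vec_apply0, smul_eq_mul]
  have hv21 : (v2 a) 1 = a * (-(1 / 2)) := by
    simp only [v2, PiLp.smul_apply, vec_apply1, smul_eq_mul]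
  refine ⟨hsum, ?_⟩
  show Complex.exp (Complex.I * ((π / 3 : ℝ) : ℂ)) *
      ((∑' m : ℤ × ℤ, Complex.exp (Complex.I * ((inner ℝ (xiv a m) (x0 a) : ℝ) : ℂ)) *
        ((xiv a m + KD a) 0 : ℂ) / ((‖xiv a m + KD a‖ ^ 2 - lam : ℝ) : ℂ) ^ 2) *
          (((v1 a) 0 : ℝ) : ℂ) +
       (∑' m : ℤ × ℤ, Complex.exp (Complex.I * ((inner ℝ (xiv a m) (x0 a) : ℝ) : ℂ)) *
        ((xiv a m + KD a) 1 : ℂ) / ((‖xiv a m + KD a‖ ^ 2 - lam : ℝ) : ℂ) ^ 2) *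
          (((v1 a) 1 : ℝ) : ℂ)) =
      (∑' m : ℤ × ℤ, Complex.exp (Complex.I * ((inner ℝ (xiv a m) (x0 a) : ℝ) : ℂ)) *
        ((xiv a m + KD a) 0 : ℂ) / ((‖xiv a m + KD a‖ ^ 2 - lam : ℝ) : ℂ) ^ 2) *
          (((v2 a) 0 : ℝ) : ℂ) +
      (∑' m : ℤ × ℤ, Complex.exp (Complex.I * ((inner ℝ (xiv a m) (x0 a) : ℝ) : ℂ)) *
        ((xiv a m + KD a) 1 : ℂ) / ((‖xiv a m + KD a‖ ^ 2 - lam : ℝ) : ℂ) ^ 2) *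
          (((v2 a) 1 : ℝ) : ℂ)
  rw [e_val, hv10, hv11, hv20, hv21]
  simp only [Complex.ofReal_mul, Complex.ofReal_div, Complex.ofReal_neg, Complex.ofReal_one,
    Complex.ofReal_ofNat]
  linear_combination (3 * (a : ℂ) / 4 + ((Real.sqrt 3 : ℝ) : ℂ) * (a : ℂ) * Complex.I / 4) * hN +
    ((a : ℂ) * Complex.I / 4 * (∑' m : ℤ × ℤ,
      Complex.exp (Complex.I * ((inner ℝ (xiv a m) (x0 a) : ℝ) : ℂ)) *
      ((xiv a m + KD a) 0 : ℂ) / ((‖xiv a m + KD a‖ ^ 2 - lam : ℝ) : ℂ) ^ 2)) * hs3 +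
    (-(((Real.sqrt 3 : ℝ) : ℂ)) * (a : ℂ) / 4 * (∑' m : ℤ × ℤ,
      Complex.exp (Complex.I * ((inner ℝ (xiv a m) (x0 a) : ℝ) : ℂ)) *
      ((xiv a m + KD a) 0 : ℂ) / ((‖xiv a m + KD a‖ ^ 2 - lam : ℝ) : ℂ) ^ 2)) * Complex.I_sq
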